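/- Let T be a product of two orthogonal projections on a complex Hilbert space H. Then T = P_M P_N for closed subspaces M, N if and only if there exist closed subspaces M₁, N₁ with M = cl(R(T)) ⊕ M₁ (orthogonal direct sum), N = N(T)^⊥ ⊕ N₁, M₁ ⊥ N₁, and M₁ ⊕ N₁ ⊆ R(T)^⊥ ∩ N(T). -/

import Mathlib

open ContinuousLinearMap Submodule LinearMap

variable {H : Type*} [NormedAddCommGroup H] [InnerProductSpace ℂ H] [CompleteSpace H]

/-- `P` is an orthogonal projection: `P² = P = P*`. -/
def IsOrthoProj (P : H →L[ℂ] H) : Prop :=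
  P ∘L P = P ∧ ContinuousLinearMap.adjoint P = P

/-- The orthogonal projection onto a (complete, i.e. closed) subspace,
as an operator on `H`. -/
noncomputable def projOn (K : Submodule ℂ H) [CompleteSpace K] : H →L[ℂ] H :=
  K.subtypeL.comp (orthogonalProjection K)

/-- The orthogonal projection onto a closed subspace, as an operator on `H`. -/
noncomputable def projOnc (K : Submodule ℂ H) (hK : IsClosed (K : Set H)) : H →L[ℂ] H :=
  haveI : CompleteSpace K := hK.completeSpace_coe
  K.subtypeL.comp (orthogonalProjection K)

/-! For `T = P_A P_B` the key identity is `T = P_R P_{N(T)ᗮ}`, where `R` is the closure of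
`R(T)`: a vector `x ∈ N(T)ᗮ` lies in `B`, so `T*(x - Tx) = P_B P_A x - P_B P_A P_A P_B x = 0`,
i.e. `x - Tx ⊥ R(T)` and `Tx` is the orthogonal projection of `x` onto `R`. Given the
decompositions `M = R ⊕ M₁`, `N = N(T)ᗮ ⊕ N₁`, the product `P_M P_N` expands into four terms
of which only `P_R P_{N(T)ᗮ} = T` survives. Conversely, if `T = P_M P_N` then `R ⊆ M` and
`N(T)ᗮ ⊆ N`; the complements `M₁ = Rᗮ ∩ M` and `N₁ = N(T) ∩ N` work because `P_N` kills
`M ∩ R(T)ᗮ = M ∩ N(T*)` and `P_M` kills `N ∩ N(T)`. -/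

namespace Submodule

variable {𝕜 E : Type*} [RCLike 𝕜] [NormedAddCommGroup E] [InnerProductSpace 𝕜 E]

theorem IsOrtho.starProjection_sup {U V : Submodule 𝕜 E} [U.HasOrthogonalProjection]
    [V.HasOrthogonalProjection] [(U ⊔ V).HasOrthogonalProjection] (h : U ⟂ V) :
    (U ⊔ V).starProjection = U.starProjection + V.starProjection := by
  ext x
  refine eq_starProjection_of_mem_orthogonal
    (add_mem_sup (starProjection_apply_mem U x) (starProjection_apply_mem V x)) ?_
  rw [← inf_orthogonal, mem_inf, _root_.add_apply, ← sub_sub]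
  constructor
  · exact Uᗮ.sub_mem (sub_starProjection_mem_orthogonal x)
      (h.symm.le (starProjection_apply_mem V x))
  · rw [sub_right_comm]
    exact Vᗮ.sub_mem (sub_starProjection_mem_orthogonal x) (h.le (starProjection_apply_mem U x))

theorem starProjection_sup_comp_starProjection_sup {A A₁ B B₁ : Submodule 𝕜 E}
    [A.HasOrthogonalProjection] [A₁.HasOrthogonalProjection] [B.HasOrthogonalProjection]
    [B₁.HasOrthogonalProjection] [(A ⊔ A₁).HasOrthogonalProjection]
    [(B ⊔ B₁).HasOrthogonalProjection] (hA : A ⟂ A₁) (hB : B ⟂ B₁) (hAB₁ : A ⟂ B₁)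
    (hA₁B : A₁ ⟂ B) (hA₁B₁ : A₁ ⟂ B₁) :
    (A ⊔ A₁).starProjection ∘L (B ⊔ B₁).starProjection = A.starProjection ∘L B.starProjection := by
  simp only [hA.starProjection_sup, hB.starProjection_sup, ContinuousLinearMap.add_comp,
    ContinuousLinearMap.comp_add, hAB₁.starProjection_comp_starProjection,
    hA₁B.starProjection_comp_starProjection, hA₁B₁.starProjection_comp_starProjection, add_zero]

section StarProjectionComp

variable (M N : Submodule 𝕜 E) [M.HasOrthogonalProjection] [N.HasOrthogonalProjection]

theorem range_starProjection_comp_starProjection_le :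
    (M.starProjection ∘L N.starProjection).range ≤ M :=
  (LinearMap.range_comp_le_range _ _).trans (range_starProjection M).le

theorem orthogonal_ker_starProjection_comp_starProjection_le :
    (M.starProjection ∘L N.starProjection).kerᗮ ≤ N := by
  simpa using orthogonal_le
    (LinearMap.ker_le_ker_comp (N.starProjection : E →ₗ[𝕜] E) (M.starProjection : E →ₗ[𝕜] E))

theorem ker_starProjection_comp_starProjection_inf_le_orthogonal :
    (M.starProjection ∘L N.starProjection).ker ⊓ N ≤ Mᗮ := by
  intro y hy
  obtain ⟨hyK, hyN⟩ := mem_inf.mp hy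
  rw [LinearMap.mem_ker, ContinuousLinearMap.coe_coe, ContinuousLinearMap.comp_apply,
    starProjection_eq_self_iff.mpr hyN] at hyK
  exact (starProjection_apply_eq_zero_iff M).mp hyK

variable [CompleteSpace E]

theorem adjoint_starProjection_comp_starProjection :
    ContinuousLinearMap.adjoint (M.starProjection ∘L N.starProjection) =
      N.starProjection ∘L M.starProjection := by
  rw [ContinuousLinearMap.adjoint_comp, (isSelfAdjoint_starProjection M).adjoint_eq,
    (isSelfAdjoint_starProjection N).adjoint_eq]

theorem orthogonal_range_inf_le_ker_starProjection_comp_starProjection :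
    (M.starProjection ∘L N.starProjection).rangeᗮ ⊓ M ≤
      (M.starProjection ∘L N.starProjection).ker := by
  intro x hx
  obtain ⟨hxR, hxM⟩ := mem_inf.mp hx
  rw [ContinuousLinearMap.orthogonal_range, adjoint_starProjection_comp_starProjection,
    LinearMap.mem_ker, ContinuousLinearMap.coe_coe, ContinuousLinearMap.comp_apply,
    starProjection_eq_self_iff.mpr hxM] at hxR
  rw [LinearMap.mem_ker, ContinuousLinearMap.coe_coe, ContinuousLinearMap.comp_apply, hxR,
    map_zero]

theorem starProjection_closure_range_comp_starProjection_orthogonal_ker :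
    (M.starProjection ∘L N.starProjection).range.topologicalClosure.starProjection ∘L
        (M.starProjection ∘L N.starProjection).kerᗮ.starProjection =
      M.starProjection ∘L N.starProjection := by
  set T := M.starProjection ∘L N.starProjection with hT
  ext x
  set y := T.kerᗮ.starProjection x
  have hTy : T y = T x := by
    have hxy := sub_starProjection_mem_orthogonal (K := T.kerᗮ) x
    rw [orthogonal_orthogonal, LinearMap.mem_ker, ContinuousLinearMap.coe_coe, map_sub,
      sub_eq_zero] at hxy
    exact hxy.symm
  have hNy : N.starProjection y = y := starProjection_eq_self_iff.mpr
    (orthogonal_ker_starProjection_comp_starProjection_le M N (starProjection_apply_mem _ x))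
  have hMM : M.starProjection (M.starProjection y) = M.starProjection y :=
    starProjection_eq_self_iff.mpr (starProjection_apply_mem M y)
  have hadj : ContinuousLinearMap.adjoint T (y - T y) = 0 := by
    rw [hT, adjoint_starProjection_comp_starProjection]
    simp [hNy, hMM]
  rw [ContinuousLinearMap.comp_apply, ← hTy]
  refine eq_starProjection_of_mem_orthogonal (le_topologicalClosure _ (mem_range_self _ y)) ?_
  rw [orthogonal_closure, ContinuousLinearMap.orthogonal_range]
  exact hadj

end StarProjectionComp

end Submodule

theorem IsOrthoProj.isStarProjection {P : H →L[ℂ] H} (hP : IsOrthoProj P) :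
    IsStarProjection P :=
  ⟨hP.1, hP.2⟩

theorem stmt9 (T : H →L[ℂ] H)
    (hX : ∃ P Q : H →L[ℂ] H, IsOrthoProj P ∧ IsOrthoProj Q ∧ T = P ∘L Q)
    (M N : Submodule ℂ H) [CompleteSpace M] [CompleteSpace N] :
    T = projOn M ∘L projOn N ↔
      ∃ M₁ N₁ : Submodule ℂ H,
        IsClosed (M₁ : Set H) ∧ IsClosed (N₁ : Set H) ∧
        M₁ ≤ ((LinearMap.range (T : H →ₗ[ℂ] H)).topologicalClosure)ᗮ ∧
        M = (LinearMap.range (T : H →ₗ[ℂ] H)).topologicalClosure ⊔ M₁ ∧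
        N₁ ≤ LinearMap.ker (T : H →ₗ[ℂ] H) ∧
        N = (LinearMap.ker (T : H →ₗ[ℂ] H))ᗮ ⊔ N₁ ∧
        M₁ ≤ N₁ᗮ ∧
        M₁ ⊔ N₁ ≤ (LinearMap.range (T : H →ₗ[ℂ] H))ᗮ ⊓ LinearMap.ker (T : H →ₗ[ℂ] H) := by
  change T = M.starProjection ∘L N.starProjection ↔ _
  rw [← orthogonal_closure T.range]
  constructor
  · rintro rfl
    have hM : IsClosed (M : Set H) := (completeSpace_coe_iff_isComplete.mp ‹_›).isClosed
    have hN : IsClosed (N : Set H) := (completeSpace_coe_iff_isComplete.mp ‹_›).isClosed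
    have hRM := topologicalClosure_minimal _ (range_starProjection_comp_starProjection_le M N) hM
    have hKN := sup_orthogonal_inf_of_hasOrthogonalProjection
      (orthogonal_ker_starProjection_comp_starProjection_le M N)
    rw [orthogonal_orthogonal] at hKN
    have hN₁M := ker_starProjection_comp_starProjection_inf_le_orthogonal M N
    refine ⟨_ᗮ ⊓ M, _ ⊓ N, (isClosed_orthogonal _).inter hM, (isClosed_ker _).inter hN,
      inf_le_left, (sup_orthogonal_inf_of_hasOrthogonalProjection hRM).symm, inf_le_left,
      hKN.symm, (isOrtho_iff_le.mpr (hN₁M.trans (orthogonal_le inf_le_right))).symm.le,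
      sup_le (le_inf inf_le_left ?_) (le_inf (hN₁M.trans (orthogonal_le hRM)) inf_le_left)⟩
    simpa only [orthogonal_closure] using
      orthogonal_range_inf_le_ker_starProjection_comp_starProjection M N
  · rintro ⟨M₁, N₁, hM₁, hN₁, hM₁R, rfl, hN₁K, rfl, hM₁N₁, hsub⟩
    obtain ⟨P, Q, hP, hQ, rfl⟩ := hX
    obtain ⟨A, _, rfl⟩ := isStarProjection_iff_eq_starProjection.mp hP.isStarProjection
    obtain ⟨B, _, rfl⟩ := isStarProjection_iff_eq_starProjection.mp hQ.isStarProjection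
    have : CompleteSpace M₁ := hM₁.completeSpace_coe
    have : CompleteSpace N₁ := hN₁.completeSpace_coe
    have hM₁K := (le_sup_left.trans hsub).trans inf_le_right
    have hN₁R := (le_sup_right.trans hsub).trans inf_le_left
    rw [starProjection_sup_comp_starProjection_sup (isOrtho_iff_le.mpr hM₁R).symm
      (isOrtho_iff_le.mpr (orthogonal_le hN₁K)) (isOrtho_iff_le.mpr hN₁R).symm
      (isOrtho_iff_le.mpr (orthogonal_le hM₁K)).symm (isOrtho_iff_le.mpr hM₁N₁),
      starProjection_closure_range_comp_starProjection_orthogonal_ker A B]
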